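/- (Hadamard conjugation for the K3ST model, inverse direction.) Let T be a finite tree whose leaves are labeled bijectively by {0,1,…,n}, with a probability distribution p_e : G → ℝ on each edge e, sequence probability spectrum P, and real numbers q_e(α), q_e(β), q_e(γ) for each edge satisfying the per-edge relations e^{−2(q_e(α)+q_e(γ))} = 1 − 2(p_e(α)+p_e(γ)), e^{−2(q_e(β)+q_e(γ))} = 1 − 2(p_e(β)+p_e(γ)), e^{−2(q_e(α)+q_e(β))} = 1 − 2(p_e(α)+p_e(β)); let Q be the associated edge-length spectrum. If every entry of the matrix H_n P H_n is strictly positive, then Q = H_n⁻¹ · Ln(H_n P H_n) · H_n⁻¹, where Ln is the entrywise natural logarithm and H_n⁻¹ = 2⁻ⁿ H_n. -/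

import Mathlib

open scoped Classical

/-- The split of the edge `e`: the set of labels `i ∈ {1,…,n}` (encoded as `Fin n`,
with `i : Fin n` standing for the label `i+1`) whose leaf lies in the connected
component of `T` with `e` removed that does not contain leaf `0`. -/
noncomputable def edgeSplit {V : Type*} (T : SimpleGraph V) {n : ℕ}
    (ℓ : Fin (n + 1) → V) (e : Sym2 V) : Finset (Fin n) :=
  Finset.univ.filter fun i => ¬(T.deleteEdges {e}).Reachable (ℓ 0) (ℓ i.succ)

/-- For an assignment `χ` of Klein-group elements to vertices, the substitution
`θ_e = χ u + χ v` across the edge `e = {u, v}` (well defined by commutativity). -/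
def edgeTheta {V : Type*} (χ : V → ZMod 2 × ZMod 2) : Sym2 V → ZMod 2 × ZMod 2 :=
  Sym2.lift ⟨fun u v => χ u + χ v, fun u v => add_comm (χ u) (χ v)⟩

/-- The `2ⁿ × 2ⁿ` Hadamard matrix indexed by subsets of `{1,…,n}`,
with entry `(A, B) ↦ (−1)^{|A ∩ B|}`. -/
def Hmat (n : ℕ) : Matrix (Finset (Fin n)) (Finset (Fin n)) ℝ :=
  Matrix.of fun A B => (-1 : ℝ) ^ (A ∩ B).card

/-- The sequence probability spectrum: the entry `(A, B)` is the probability of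
observing the site pattern `(A, B)` at the leaves. -/
noncomputable def Pspec {V : Type*} [Fintype V] (T : SimpleGraph V) {n : ℕ}
    (ℓ : Fin (n + 1) → V) (p : Sym2 V → ZMod 2 × ZMod 2 → ℝ) :
    Matrix (Finset (Fin n)) (Finset (Fin n)) ℝ :=
  Matrix.of fun A B =>
    ∑ χ ∈ (Finset.univ : Finset (V → ZMod 2 × ZMod 2)).filter
        (fun χ => χ (ℓ 0) = 0 ∧
          (Finset.univ.filter fun i : Fin n => (χ (ℓ i.succ)).1 = 1) = A ∧
          (Finset.univ.filter fun i : Fin n => (χ (ℓ i.succ)).2 = 1) = B),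
      ∏ e ∈ T.edgeFinset, p e (edgeTheta χ e)

/-- The edge-length spectrum of the tree `T` with edge weights `qa, qb, qc`
(for substitution types α, β, γ): the weights of the edge `e` are placed at the
positions `(A_e, ∅)`, `(∅, A_e)` and `(A_e, A_e)` indexed by its split `A_e`, with
`-Σ_e (qa e + qb e + qc e)` at `(∅, ∅)` and `0` elsewhere. -/
noncomputable def QspecT {V : Type*} [Fintype V] (T : SimpleGraph V) {n : ℕ}
    (ℓ : Fin (n + 1) → V) (qa qb qc : Sym2 V → ℝ) :
    Matrix (Finset (Fin n)) (Finset (Fin n)) ℝ :=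
  Matrix.of fun A B =>
    if A = ∅ ∧ B = ∅ then -∑ e ∈ T.edgeFinset, (qa e + qb e + qc e)
    else if B = ∅ then ∑ e ∈ T.edgeFinset.filter (fun e => edgeSplit T ℓ e = A), qa e
    else if A = ∅ then ∑ e ∈ T.edgeFinset.filter (fun e => edgeSplit T ℓ e = B), qb e
    else if A = B then ∑ e ∈ T.edgeFinset.filter (fun e => edgeSplit T ℓ e = A), qc e
    else 0




noncomputable def sgn (x : ZMod 2) : ℝ := if x = 1 then -1 else 1

lemma zmod2_cases (x : ZMod 2) : x = 0 ∨ x = 1 := by revert x; decide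

lemma sgn_zero : sgn 0 = 1 := by norm_num [sgn]

lemma sgn_one : sgn 1 = -1 := by norm_num [sgn]

lemma sgn_add (x y : ZMod 2) : sgn (x + y) = sgn x * sgn y := by
  rcases zmod2_cases x with rfl | rfl <;> rcases zmod2_cases y with rfl | rfl <;>
    norm_num [sgn] <;> decide

lemma sgn_sum {ι : Type*} (s : Finset ι) (f : ι → ZMod 2) :
    sgn (∑ i ∈ s, f i) = ∏ i ∈ s, sgn (f i) := by
  classical
  induction s using Finset.cons_induction with
  | empty => simp [sgn_zero]
  | cons a s ha ih => rw [Finset.sum_cons, Finset.prod_cons, sgn_add, ih]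

lemma sum_zmod2 (f : ZMod 2 → ℝ) : ∑ x : ZMod 2, f x = f 0 + f 1 := by
  have h : (Finset.univ : Finset (ZMod 2)) = {0, 1} := by decide
  rw [h, Finset.sum_insert (by decide), Finset.sum_singleton]

lemma sumG (f : ZMod 2 × ZMod 2 → ℝ) :
    ∑ g : ZMod 2 × ZMod 2, f g = f (0,0) + f (1,0) + f (0,1) + f (1,1) := by
  rw [Fintype.sum_prod_type, sum_zmod2 (fun x => ∑ y : ZMod 2, f (x, y)),
    sum_zmod2 (fun y => f (0, y)), sum_zmod2 (fun y => f (1, y))]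
  ring

lemma prod_ite_pred {ι : Type*} (A : Finset ι) (P : ι → Prop) [DecidablePred P] (c : ℝ) :
    (∏ i ∈ A, if P i then c else 1) = c ^ (A.filter P).card := by
  rw [Finset.prod_ite, Finset.prod_const, Finset.prod_const_one, mul_one]

lemma prod_ite_mem {ι : Type*} [DecidableEq ι] (A S : Finset ι) (c : ℝ) :
    (∏ i ∈ A, if i ∈ S then c else 1) = c ^ (A ∩ S).card := by
  rw [prod_ite_pred, Finset.filter_mem_eq_inter]

lemma sum_neg_one_pow {n : ℕ} (S : Finset (Fin n)) :
    (∑ C : Finset (Fin n), (-1 : ℝ) ^ ((C ∩ S).card)) = if S = ∅ then (2:ℝ)^n else 0 := by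
  have h1 : ∀ C : Finset (Fin n), (-1 : ℝ) ^ ((C ∩ S).card)
      = (∏ i ∈ C, if i ∈ S then (-1:ℝ) else 1) * ∏ i ∈ Finset.univ \ C, (1:ℝ) := by
    intro C; rw [prod_ite_mem, Finset.prod_const_one, mul_one]
  rw [Finset.sum_congr rfl fun C _ => h1 C]
  have h2 : (Finset.univ : Finset (Finset (Fin n))) = Finset.univ.powerset := by
    rw [Finset.powerset_univ]
  rw [h2, ← Finset.prod_add]
  by_cases hS : S = ∅
  · subst hS; simp; norm_num
  · rw [if_neg hS]
    obtain ⟨i, hi⟩ := Finset.nonempty_iff_ne_empty.mpr hS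
    refine Finset.prod_eq_zero (Finset.mem_univ i) ?_
    rw [if_pos hi]; norm_num


lemma hmat_apply {n : ℕ} (A B : Finset (Fin n)) : Hmat n A B = (-1:ℝ) ^ ((A ∩ B).card) := rfl

lemma hmat_empty_right {n : ℕ} (A : Finset (Fin n)) : Hmat n A ∅ = 1 := by
  simp [hmat_apply]

lemma hmat_empty_left {n : ℕ} (B : Finset (Fin n)) : Hmat n ∅ B = 1 := by
  simp [hmat_apply]

lemma hmat_as_prod {n : ℕ} (A B : Finset (Fin n)) :
    Hmat n A B = ∏ i ∈ B, if i ∈ A then (-1:ℝ) else 1 := by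
  rw [hmat_apply, Finset.inter_comm, prod_ite_mem, Finset.inter_comm]

lemma hmat_mul_hmat (n : ℕ) : Hmat n * Hmat n = ((2:ℝ)^n) • (1 : Matrix (Finset (Fin n)) (Finset (Fin n)) ℝ) := by
  ext A B
  rw [Matrix.mul_apply]
  have h1 : ∀ C : Finset (Fin n), Hmat n A C * Hmat n C B
      = (-1:ℝ) ^ ((C ∩ (symmDiff A B)).card) := by
    intro C
    have e2 : Hmat n C B = ∏ i ∈ C, if i ∈ B then (-1:ℝ) else 1 := by
      rw [hmat_apply, Finset.inter_comm, ← hmat_apply, hmat_as_prod]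
    rw [hmat_as_prod, e2, ← Finset.prod_mul_distrib, ← prod_ite_mem C (symmDiff A B)]
    refine Finset.prod_congr rfl fun i _ => ?_
    by_cases hA : i ∈ A <;> by_cases hB : i ∈ B <;>
      simp [hA, hB, Finset.mem_symmDiff]
  rw [Finset.sum_congr rfl fun C _ => h1 C, sum_neg_one_pow]
  rw [Matrix.smul_apply, Matrix.one_apply]
  by_cases h : A = B
  · subst h; simp [symmDiff_self]
  · rw [if_neg ?_, if_neg h, smul_zero]
    rw [← Finset.bot_eq_empty, symmDiff_eq_bot]
    exact h

lemma hmat_stdBasis_hmat {n : ℕ} (C D : Finset (Fin n)) (x : ℝ) (A B : Finset (Fin n)) :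
    (Hmat n * Matrix.single C D x * Hmat n) A B
      = Hmat n A C * x * Hmat n D B := by
  rw [Matrix.mul_apply]
  rw [Finset.sum_eq_single D]
  · rw [Matrix.mul_single_apply_same (c := x) (i := C) (j := D) (a := A)]
  · intro b _ hb
    rw [Matrix.mul_single_apply_of_ne (c := x) (i := C) (j := D) (a := A) (b := b) (hbj := hb), zero_mul]
  · intro h; exact absurd (Finset.mem_univ D) h


section TreeLemmas

variable {V : Type*} {T : SimpleGraph V}

lemma del_adj {e : Sym2 V} {u v : V} (h : T.Adj u v) (hne : s(u,v) ≠ e) :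
    (T.deleteEdges {e}).Adj u v := by
  rw [SimpleGraph.deleteEdges_adj]; exact ⟨h, by simpa using hne⟩

lemma bridge_not_reach (hT : T.IsTree) {u v : V} (h : T.Adj u v) :
    ¬ (T.deleteEdges {s(u,v)}).Reachable u v := by
  have hb := (SimpleGraph.isAcyclic_iff_forall_adj_isBridge.mp hT.IsAcyclic) h
  rw [SimpleGraph.isBridge_iff] at hb
  exact hb

lemma reach_del_side (hT : T.IsTree) {u v : V} (h : T.Adj u v) (x : V) :
    (T.deleteEdges {s(u,v)}).Reachable x u ∨ (T.deleteEdges {s(u,v)}).Reachable x v := by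
  have main : ∀ (x y : V) (w : T.Walk x y), (T.deleteEdges {s(u,v)}).Reachable x y ∨
      (T.deleteEdges {s(u,v)}).Reachable x u ∨ (T.deleteEdges {s(u,v)}).Reachable x v := by
    intro x y w
    induction w with
    | nil => exact Or.inl (SimpleGraph.Reachable.refl _)
    | @cons a b c hadj w ih =>
      by_cases he : s(a, b) = s(u, v)
      · rcases Sym2.eq_iff.mp he with ⟨h1, h2⟩ | ⟨h1, h2⟩
        · exact Or.inr (Or.inl (h1 ▸ SimpleGraph.Reachable.refl a))
        · exact Or.inr (Or.inr (h1 ▸ SimpleGraph.Reachable.refl a))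
      · have hadj' : (T.deleteEdges {s(u,v)}).Adj a b := del_adj hadj he
        rcases ih with h1 | h1 | h1
        · exact Or.inl (hadj'.reachable.trans h1)
        · exact Or.inr (Or.inl (hadj'.reachable.trans h1))
        · exact Or.inr (Or.inr (hadj'.reachable.trans h1))
  obtain ⟨w⟩ := hT.isConnected x u
  rcases main x u w with h1 | h1 | h1
  · exact Or.inl h1
  · exact Or.inl h1
  · exact Or.inr h1

lemma path_length_eq_dist (hT : T.IsTree) {u v : V} (p : T.Walk u v) (hp : p.IsPath) :
    p.length = T.dist u v := by
  classical
  refine le_antisymm ?_ (SimpleGraph.dist_le p)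
  obtain ⟨w, hw⟩ := hT.isConnected.exists_walk_length_eq_dist u v
  have hpb : p = w.bypass := by
    have := hT.IsAcyclic.path_unique ⟨p, hp⟩ ⟨w.bypass, w.bypass_isPath⟩
    exact congrArg Subtype.val this
  rw [hpb, ← hw]
  exact w.length_bypass_le

lemma isPath_concat {u v w : V} {p : T.Walk u v} (hp : p.IsPath) (h : T.Adj v w)
    (hw : w ∉ p.support) : (p.concat h).IsPath := by
  rw [SimpleGraph.Walk.isPath_def, SimpleGraph.Walk.support_concat]
  simp [List.nodup_append, hp.support_nodup, hw]
  exact fun a ha hae => hw (hae ▸ ha)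

lemma exists_unreachable_leaf [Fintype V] (hT : T.IsTree) {u v : V} (hadj : T.Adj u v) (r : V)
    (hru : (T.deleteEdges {s(u,v)}).Reachable r u) :
    ∃ x : V, ¬ (T.deleteEdges {s(u,v)}).Reachable r x ∧ T.degree x = 1 := by
  classical
  set T' := T.deleteEdges {s(u,v)} with hT'
  have hnotrv : ¬ T'.Reachable r v := fun hrv => bridge_not_reach hT hadj (hru.symm.trans hrv)
  set S : Finset V := Finset.univ.filter (fun x => ¬ T'.Reachable r x) with hS
  have hvS : v ∈ S := Finset.mem_filter.mpr ⟨Finset.mem_univ _, hnotrv⟩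
  obtain ⟨x0, hx0S, hmax⟩ := Finset.exists_max_image S (fun x => T.dist u x) ⟨v, hvS⟩
  have hx0 : ¬ T'.Reachable r x0 := (Finset.mem_filter.mp hx0S).2
  have hx0u : x0 ≠ u := fun h => hx0 (h ▸ hru)
  obtain ⟨p, hp, hpu⟩ := hT.existsUnique_path u x0
  obtain ⟨y0, q, hy0, hpc⟩ : ∃ (y0 : V) (q : T.Walk u y0) (h' : T.Adj y0 x0),
      p = q.concat h' := by
    cases p with
    | nil => exact absurd rfl hx0u.symm
    | cons h w => exact SimpleGraph.Walk.exists_cons_eq_concat h w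
  have hkey : ∀ z : V, T.Adj x0 z → z = y0 := by
    intro z hz
    by_cases hcase : s(x0, z) = s(u, v)
    · rcases Sym2.eq_iff.mp hcase with ⟨h1, h2⟩ | ⟨h1, h2⟩
      · exact absurd h1 hx0u
      · subst h1; subst h2
        have hpeq : (SimpleGraph.Walk.cons hadj SimpleGraph.Walk.nil : T.Walk _ _) = p :=
          hpu (SimpleGraph.Walk.cons hadj SimpleGraph.Walk.nil)
            (by simp [SimpleGraph.Walk.cons_isPath_iff, hadj.ne])
        have hcc : q.concat hy0 = SimpleGraph.Walk.nil.concat hadj := by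
          rw [SimpleGraph.Walk.concat_nil, hpeq, hpc]
        obtain ⟨hyu, -⟩ := SimpleGraph.Walk.concat_inj hcc
        exact hyu.symm
    · have hzS' : ¬ T'.Reachable r z := by
        intro hrz
        have hadj' : T'.Adj z x0 := del_adj hz.symm
          (by rw [show s(z,x0) = s(x0,z) from Sym2.eq_swap]; exact hcase)
        exact hx0 (hrz.trans hadj'.reachable)
      have hzS : z ∈ S := Finset.mem_filter.mpr ⟨Finset.mem_univ _, hzS'⟩
      by_cases hzsup : z ∈ p.support
      · have hzx0 : z ≠ x0 := fun h => (h ▸ hz).ne rfl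
        have htp := hp.takeUntil hzsup
        have hx0nsup : x0 ∉ (p.takeUntil z hzsup).support := by
          intro hmem
          have hspec := SimpleGraph.Walk.take_spec p hzsup
          have hnodup := hp.support_nodup
          rw [← hspec, SimpleGraph.Walk.support_append] at hnodup
          have hx0tail : x0 ∈ (p.dropUntil z hzsup).support.tail := by
            have hend := (p.dropUntil z hzsup).end_mem_support
            rw [SimpleGraph.Walk.support_eq_cons] at hend
            rcases List.mem_cons.mp hend with h' | h'
            · exact absurd h'.symm hzx0
            · exact h'
          exact (List.disjoint_of_nodup_append hnodup) hmem hx0tail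
        have hq2 : ((p.takeUntil z hzsup).concat hz.symm).IsPath :=
          isPath_concat htp hz.symm hx0nsup
        have heq := hpu _ hq2
        have hcc2 : (p.takeUntil z hzsup).concat hz.symm = q.concat hy0 := heq.trans hpc
        obtain ⟨hzy, -⟩ := SimpleGraph.Walk.concat_inj hcc2
        exact hzy
      · have hq3 : (p.concat hz).IsPath := isPath_concat hp hz hzsup
        have h1 : T.dist u z = p.length + 1 := by
          rw [← path_length_eq_dist hT _ hq3, SimpleGraph.Walk.length_concat]
        have h2 : T.dist u x0 = p.length := (path_length_eq_dist hT p hp).symm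
        have h3 := hmax z hzS
        simp only [h1, h2] at h3
        omega
  have hdeg : T.degree x0 = 1 := by
    have hnb : T.neighborFinset x0 = {y0} := by
      ext z
      simp only [SimpleGraph.mem_neighborFinset, Finset.mem_singleton]
      constructor
      · exact hkey z
      · rintro rfl; exact hy0.symm
    rw [show T.degree x0 = (T.neighborFinset x0).card from rfl, hnb, Finset.card_singleton]
  exact ⟨x0, hx0, hdeg⟩

lemma edgeSplit_nonempty [Fintype V] (hT : T.IsTree) {n : ℕ} (ℓ : Fin (n+1) → V)
    (hleaf : ∀ v : V, T.degree v = 1 ↔ v ∈ Set.range ℓ) {e : Sym2 V}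
    (he : e ∈ T.edgeFinset) : edgeSplit T ℓ e ≠ ∅ := by
  classical
  induction e using Sym2.ind with
  | _ u v =>
  rw [SimpleGraph.mem_edgeFinset, SimpleGraph.mem_edgeSet] at he
  have key : ∀ (a b : V), T.Adj a b → (T.deleteEdges {s(a,b)}).Reachable (ℓ 0) a →
      edgeSplit T ℓ s(a,b) ≠ ∅ := by
    intro a b hab hra hempty
    obtain ⟨x, hx, hdeg⟩ := exists_unreachable_leaf hT hab (ℓ 0) hra
    obtain ⟨j, hj⟩ := (hleaf x).mp hdeg
    have hj0 : j ≠ 0 := by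
      rintro rfl
      exact hx (hj ▸ SimpleGraph.Reachable.refl _)
    obtain ⟨i, hi⟩ := Fin.exists_succ_eq.mpr hj0
    have hmem : i ∈ edgeSplit T ℓ s(a,b) := by
      simp only [edgeSplit, Finset.mem_filter, Finset.mem_univ, true_and]
      rw [hi, hj]; exact hx
    rw [hempty] at hmem
    exact absurd hmem (Finset.notMem_empty i)
  rcases reach_del_side hT he (ℓ 0) with hru | hrv
  · exact key u v he hru
  · have h2 := key v u he.symm (by rw [Sym2.eq_swap]; exact hrv)
    rw [Sym2.eq_swap] at h2
    exact h2

end TreeLemmas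
section Chi

variable {V : Type*} [Fintype V] {T : SimpleGraph V}

lemma g_add_self (x : ZMod 2 × ZMod 2) : x + x = 0 := by revert x; decide

lemma g_rearrange (a b c d : ZMod 2 × ZMod 2) (h : a + b = c + d) : a + c = b + d := by
  revert h; revert a b c d; decide

lemma g_eq_of_add_zero (a b : ZMod 2 × ZMod 2) (h : a + b = 0) : a = b := by
  revert h; revert a b; decide

/-- Reconstruction of a vertex colouring from edge substitutions. -/
noncomputable def chiOf (T : SimpleGraph V) (r : V)
    (θ : T.edgeFinset → ZMod 2 × ZMod 2) : V → ZMod 2 × ZMod 2 := fun v =>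
  ∑ e : T.edgeFinset, if ¬(T.deleteEdges {(e : Sym2 V)}).Reachable r v then θ e else 0

lemma edgeTheta_sym {χ : V → ZMod 2 × ZMod 2} (u v : V) :
    edgeTheta χ s(u, v) = χ u + χ v := rfl

lemma chiOf_root (r : V) (θ : T.edgeFinset → ZMod 2 × ZMod 2) : chiOf T r θ r = 0 :=
  Finset.sum_eq_zero fun e _ => if_neg (not_not_intro (SimpleGraph.Reachable.refl r))

lemma chiOf_edge (hT : T.IsTree) (r : V) (θ : T.edgeFinset → ZMod 2 × ZMod 2)
    {u v : V} (huv : T.Adj u v) :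
    chiOf T r θ u + chiOf T r θ v
      = θ ⟨s(u,v), by rw [SimpleGraph.mem_edgeFinset, SimpleGraph.mem_edgeSet]; exact huv⟩ := by
  classical
  set e0 : T.edgeFinset :=
    ⟨s(u,v), by rw [SimpleGraph.mem_edgeFinset, SimpleGraph.mem_edgeSet]; exact huv⟩ with he0
  rw [chiOf, chiOf, ← Finset.sum_add_distrib]
  rw [Finset.sum_eq_single e0]
  · have hnb : ¬(T.deleteEdges {s(u,v)}).Reachable u v := bridge_not_reach hT huv
    rcases reach_del_side hT huv r with hru | hrv
    · have hnrv : ¬(T.deleteEdges {s(u,v)}).Reachable r v := fun h => hnb (hru.symm.trans h)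
      rw [if_neg (not_not_intro hru), if_pos hnrv, zero_add]
    · have hnru : ¬(T.deleteEdges {s(u,v)}).Reachable r u := fun h => hnb (h.symm.trans hrv)
      rw [if_pos hnru, if_neg (not_not_intro hrv), add_zero]
  · intro f _ hf
    have hne : s(u,v) ≠ (f : Sym2 V) := fun h => hf (Subtype.ext h.symm)
    have hadj' : (T.deleteEdges {(f : Sym2 V)}).Adj u v := del_adj huv hne
    have hiff : (T.deleteEdges {(f : Sym2 V)}).Reachable r u ↔
        (T.deleteEdges {(f : Sym2 V)}).Reachable r v :=
      ⟨fun h => h.trans hadj'.reachable, fun h => h.trans hadj'.symm.reachable⟩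
    by_cases hc : (T.deleteEdges {(f : Sym2 V)}).Reachable r u
    · rw [if_neg (not_not_intro hc), if_neg (not_not_intro (hiff.mp hc)), add_zero]
    · rw [if_pos hc, if_pos (fun h => hc (hiff.mpr h))]
      exact g_add_self _
  · intro h; exact absurd (Finset.mem_univ _) h

lemma chi_unique (hT : T.IsTree) (r : V) {χ₁ χ₂ : V → ZMod 2 × ZMod 2} (h0 : χ₁ r = χ₂ r)
    (hE : ∀ u v, T.Adj u v → χ₁ u + χ₁ v = χ₂ u + χ₂ v) : χ₁ = χ₂ := by
  funext v
  have main : ∀ (x y : V) (w : T.Walk x y), χ₁ x + χ₂ x = χ₁ y + χ₂ y := by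
    intro x y w
    induction w with
    | nil => rfl
    | @cons a b c hadj w ih => rw [← ih]; exact g_rearrange _ _ _ _ (hE a b hadj)
  obtain ⟨w⟩ := hT.isConnected r v
  have h1 := main r v w
  rw [h0] at h1
  exact g_eq_of_add_zero _ _ (by rw [← h1]; exact g_add_self _)

lemma edgeTheta_chiOf (hT : T.IsTree) (r : V) (θ : T.edgeFinset → ZMod 2 × ZMod 2)
    (f : T.edgeFinset) : edgeTheta (chiOf T r θ) (f : Sym2 V) = θ f := by
  obtain ⟨e, he⟩ := f
  revert he
  induction e using Sym2.ind with
  | _ u v =>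
    intro he
    have huv : T.Adj u v := by rwa [SimpleGraph.mem_edgeFinset, SimpleGraph.mem_edgeSet] at he
    rw [edgeTheta_sym, chiOf_edge hT r θ huv]

lemma chiOf_theta (hT : T.IsTree) (r : V) {χ : V → ZMod 2 × ZMod 2} (h0 : χ r = 0) :
    chiOf T r (fun e => edgeTheta χ (e : Sym2 V)) = χ := by
  refine chi_unique hT r ?_ ?_
  · rw [chiOf_root, h0]
  · intro u v huv
    rw [chiOf_edge hT r _ huv, edgeTheta_sym]

end Chi
/-- Per-edge contribution to the conjugated spectra. -/
noncomputable def tauK {V : Type*} (T : SimpleGraph V) {n : ℕ} (ℓ : Fin (n + 1) → V)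
    (qa qb qc : Sym2 V → ℝ) (A B : Finset (Fin n)) (e : Sym2 V) : ℝ :=
  ((-1:ℝ) ^ ((A ∩ edgeSplit T ℓ e).card) - 1) * qa e
    + ((-1:ℝ) ^ ((B ∩ edgeSplit T ℓ e).card) - 1) * qb e
    + ((-1:ℝ) ^ ((A ∩ edgeSplit T ℓ e).card) * (-1:ℝ) ^ ((B ∩ edgeSplit T ℓ e).card) - 1) * qc e

section KeyTwo

variable {V : Type*} [Fintype V] {T : SimpleGraph V}

lemma Qspec_decomp (hT : T.IsTree) {n : ℕ} (ℓ : Fin (n + 1) → V)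
    (hleaf : ∀ v : V, T.degree v = 1 ↔ v ∈ Set.range ℓ) (qa qb qc : Sym2 V → ℝ) :
    QspecT T ℓ qa qb qc =
      (∑ e ∈ T.edgeFinset, (Matrix.single (edgeSplit T ℓ e) ∅ (qa e)
        + Matrix.single ∅ (edgeSplit T ℓ e) (qb e)
        + Matrix.single (edgeSplit T ℓ e) (edgeSplit T ℓ e) (qc e)))
      + Matrix.single ∅ ∅ (-∑ e ∈ T.edgeFinset, (qa e + qb e + qc e)) := by
  classical
  have hsne : ∀ e ∈ T.edgeFinset, edgeSplit T ℓ e ≠ ∅ :=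
    fun e he => edgeSplit_nonempty hT ℓ hleaf he
  ext A B
  rw [Matrix.add_apply, Matrix.sum_apply]
  by_cases hA : A = ∅ <;> by_cases hB : B = ∅
  · subst hA; subst hB
    have hterm : ∀ e ∈ T.edgeFinset,
        ((Matrix.single (edgeSplit T ℓ e) ∅ (qa e)
          + Matrix.single ∅ (edgeSplit T ℓ e) (qb e)
          + Matrix.single (edgeSplit T ℓ e) (edgeSplit T ℓ e) (qc e) :
          Matrix (Finset (Fin n)) (Finset (Fin n)) ℝ))
          (∅ : Finset (Fin n)) (∅ : Finset (Fin n)) = 0 := by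
      intro e he
      rw [Matrix.add_apply, Matrix.add_apply,
        Matrix.single_apply_of_ne _ _ _ _ _ (fun hc => hsne e he hc.1),
        Matrix.single_apply_of_ne _ _ _ _ _ (fun hc => hsne e he hc.2),
        Matrix.single_apply_of_ne _ _ _ _ _ (fun hc => hsne e he hc.1)]
      ring
    rw [Finset.sum_congr rfl hterm, Finset.sum_const_zero, zero_add,
      Matrix.single_apply_same]
    simp [QspecT]
  · subst hA
    have hterm : ∀ e ∈ T.edgeFinset,
        ((Matrix.single (edgeSplit T ℓ e) ∅ (qa e)
          + Matrix.single ∅ (edgeSplit T ℓ e) (qb e)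
          + Matrix.single (edgeSplit T ℓ e) (edgeSplit T ℓ e) (qc e) :
          Matrix (Finset (Fin n)) (Finset (Fin n)) ℝ))
          (∅ : Finset (Fin n)) B = if edgeSplit T ℓ e = B then qb e else 0 := by
      intro e he
      rw [Matrix.add_apply, Matrix.add_apply,
        Matrix.single_apply_of_ne (edgeSplit T ℓ e) ∅ (qa e) ∅ B
          (fun hc => hsne e he hc.1),
        Matrix.single_apply_of_ne (edgeSplit T ℓ e) (edgeSplit T ℓ e) (qc e) ∅ B
          (fun hc => hsne e he hc.1)]
      rw [zero_add, add_zero]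
      by_cases hc : edgeSplit T ℓ e = B
      · subst hc; rw [if_pos rfl]; exact Matrix.single_apply_same _ _ _
      · rw [if_neg hc]
        exact Matrix.single_apply_of_ne _ _ _ _ _ (fun hcc => hc hcc.2)
    rw [Finset.sum_congr rfl hterm, ← Finset.sum_filter,
      Matrix.single_apply_of_ne _ _ _ _ _ (fun hc => hB hc.2.symm), add_zero]
    simp [QspecT, hB]
  · subst hB
    have hterm : ∀ e ∈ T.edgeFinset,
        ((Matrix.single (edgeSplit T ℓ e) ∅ (qa e)
          + Matrix.single ∅ (edgeSplit T ℓ e) (qb e)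
          + Matrix.single (edgeSplit T ℓ e) (edgeSplit T ℓ e) (qc e) :
          Matrix (Finset (Fin n)) (Finset (Fin n)) ℝ))
          A (∅ : Finset (Fin n)) = if edgeSplit T ℓ e = A then qa e else 0 := by
      intro e he
      rw [Matrix.add_apply, Matrix.add_apply,
        Matrix.single_apply_of_ne ∅ (edgeSplit T ℓ e) (qb e) A ∅
          (fun hc => hA hc.1.symm),
        Matrix.single_apply_of_ne (edgeSplit T ℓ e) (edgeSplit T ℓ e) (qc e) A ∅
          (fun hc => hsne e he hc.2)]
      rw [add_zero, add_zero]
      by_cases hc : edgeSplit T ℓ e = A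
      · subst hc; rw [if_pos rfl]; exact Matrix.single_apply_same _ _ _
      · rw [if_neg hc]
        exact Matrix.single_apply_of_ne (edgeSplit T ℓ e) ∅ (qa e) A ∅
          (fun hcc => hc hcc.1)
    rw [Finset.sum_congr rfl hterm, ← Finset.sum_filter,
      Matrix.single_apply_of_ne _ _ _ _ _ (fun hc => hA hc.1.symm), add_zero]
    simp [QspecT, hA]
  · have hterm : ∀ e ∈ T.edgeFinset,
        ((Matrix.single (edgeSplit T ℓ e) ∅ (qa e)
          + Matrix.single ∅ (edgeSplit T ℓ e) (qb e)
          + Matrix.single (edgeSplit T ℓ e) (edgeSplit T ℓ e) (qc e) :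
          Matrix (Finset (Fin n)) (Finset (Fin n)) ℝ))
          A B = if edgeSplit T ℓ e = A ∧ edgeSplit T ℓ e = B then qc e else 0 := by
      intro e he
      rw [Matrix.add_apply, Matrix.add_apply,
        Matrix.single_apply_of_ne _ _ _ _ _ (fun hc => hB hc.2.symm),
        Matrix.single_apply_of_ne _ _ _ _ _ (fun hc => hA hc.1.symm)]
      rw [zero_add, zero_add]
      by_cases hc : edgeSplit T ℓ e = A ∧ edgeSplit T ℓ e = B
      · rw [if_pos hc]
        obtain ⟨h1, h2⟩ := hc
        subst h1
        rw [← h2]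
        exact Matrix.single_apply_same _ _ _
      · rw [if_neg hc]
        exact Matrix.single_apply_of_ne _ _ _ _ _ (fun hcc => hc hcc)
    rw [Finset.sum_congr rfl hterm,
      Matrix.single_apply_of_ne _ _ _ _ _ (fun hc => hA hc.1.symm), add_zero]
    by_cases hAB : A = B
    · subst hAB
      have : ∀ e ∈ T.edgeFinset, (if edgeSplit T ℓ e = A ∧ edgeSplit T ℓ e = A then qc e else 0)
          = if edgeSplit T ℓ e = A then qc e else 0 := by
        intro e _; by_cases hc : edgeSplit T ℓ e = A
        · rw [if_pos ⟨hc, hc⟩, if_pos hc]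
        · rw [if_neg (fun hcc => hc hcc.1), if_neg hc]
      rw [Finset.sum_congr rfl this, ← Finset.sum_filter]
      simp [QspecT, hA]
    · have : ∀ e ∈ T.edgeFinset, (if edgeSplit T ℓ e = A ∧ edgeSplit T ℓ e = B then qc e else 0)
          = 0 := by
        intro e _
        exact if_neg (fun hc => hAB (hc.1.symm.trans hc.2))
      rw [Finset.sum_congr rfl this, Finset.sum_const_zero]
      simp [QspecT, hA, hB, hAB]

lemma key_two (hT : T.IsTree) {n : ℕ} (ℓ : Fin (n + 1) → V)
    (hleaf : ∀ v : V, T.degree v = 1 ↔ v ∈ Set.range ℓ) (qa qb qc : Sym2 V → ℝ)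
    (A B : Finset (Fin n)) :
    (Hmat n * QspecT T ℓ qa qb qc * Hmat n) A B = ∑ e ∈ T.edgeFinset, tauK T ℓ qa qb qc A B e := by
  classical
  rw [Qspec_decomp hT ℓ hleaf qa qb qc, Matrix.mul_add, Matrix.add_mul, Matrix.add_apply,
    Matrix.mul_sum, Matrix.sum_mul, Matrix.sum_apply, hmat_stdBasis_hmat, hmat_empty_left,
    hmat_empty_right, one_mul, mul_one]
  have hterm : ∀ e ∈ T.edgeFinset,
      ((Hmat n * (Matrix.single (edgeSplit T ℓ e) ∅ (qa e)
        + Matrix.single ∅ (edgeSplit T ℓ e) (qb e)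
        + Matrix.single (edgeSplit T ℓ e) (edgeSplit T ℓ e) (qc e)) * Hmat n :
        Matrix (Finset (Fin n)) (Finset (Fin n)) ℝ)) A B
      = tauK T ℓ qa qb qc A B e + (qa e + qb e + qc e) := by
    intro e _
    rw [Matrix.mul_add, Matrix.mul_add, Matrix.add_mul, Matrix.add_mul, Matrix.add_apply,
      Matrix.add_apply, hmat_stdBasis_hmat, hmat_stdBasis_hmat, hmat_stdBasis_hmat,
      hmat_empty_left, hmat_empty_right, one_mul, mul_one]
    simp only [hmat_apply]
    rw [Finset.inter_comm (edgeSplit T ℓ e) B, tauK]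
    ring
  rw [Finset.sum_congr rfl hterm, Finset.sum_add_distrib]
  ring

end KeyTwo
section KeyOne

variable {V : Type*} [Fintype V] {T : SimpleGraph V}

lemma prod_sgn {ι : Type*} (A : Finset ι) (h : ι → ZMod 2) :
    ∏ i ∈ A, sgn (h i) = (-1:ℝ) ^ ((A.filter (fun i => h i = 1)).card) := by
  classical
  rw [← prod_ite_pred A (fun i => h i = 1) (-1:ℝ)]
  refine Finset.prod_congr rfl fun i _ => ?_
  by_cases hx : h i = 1 <;> simp [sgn, hx]

lemma edge_factor {p : Sym2 V → ZMod 2 × ZMod 2 → ℝ} {qa qb qc : Sym2 V → ℝ} {e : Sym2 V}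
    (hp1 : ∑ g : ZMod 2 × ZMod 2, p e g = 1)
    (hq1 : Real.exp (-2 * (qa e + qc e)) = 1 - 2 * (p e (1, 0) + p e (1, 1)))
    (hq2 : Real.exp (-2 * (qb e + qc e)) = 1 - 2 * (p e (0, 1) + p e (1, 1)))
    (hq3 : Real.exp (-2 * (qa e + qb e)) = 1 - 2 * (p e (1, 0) + p e (0, 1)))
    (a b : ℕ) :
    (∑ g : ZMod 2 × ZMod 2, sgn g.1 ^ a * p e g * sgn g.2 ^ b)
      = Real.exp (((-1:ℝ)^a - 1) * qa e + ((-1:ℝ)^b - 1) * qb e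
          + ((-1:ℝ)^a * (-1:ℝ)^b - 1) * qc e) := by
  rw [sumG] at hp1
  rw [sumG (fun g => sgn g.1 ^ a * p e g * sgn g.2 ^ b)]
  simp only [sgn_zero, sgn_one, one_pow, one_mul, mul_one]
  rcases Nat.even_or_odd a with ha | ha <;> rcases Nat.even_or_odd b with hb | hb
  · rw [ha.neg_one_pow, hb.neg_one_pow]
    have h0 : ((1:ℝ) - 1) * qa e + ((1:ℝ) - 1) * qb e + ((1:ℝ) * 1 - 1) * qc e = 0 := by ring
    rw [h0, Real.exp_zero]
    linarith
  · rw [ha.neg_one_pow, hb.neg_one_pow]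
    have h0 : ((1:ℝ) - 1) * qa e + ((-1:ℝ) - 1) * qb e + ((1:ℝ) * (-1) - 1) * qc e
        = -2 * (qb e + qc e) := by ring
    rw [h0, hq2]
    linarith
  · rw [ha.neg_one_pow, hb.neg_one_pow]
    have h0 : ((-1:ℝ) - 1) * qa e + ((1:ℝ) - 1) * qb e + ((-1:ℝ) * 1 - 1) * qc e
        = -2 * (qa e + qc e) := by ring
    rw [h0, hq1]
    linarith
  · rw [ha.neg_one_pow, hb.neg_one_pow]
    have h0 : ((-1:ℝ) - 1) * qa e + ((-1:ℝ) - 1) * qb e + ((-1:ℝ) * (-1) - 1) * qc e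
        = -2 * (qa e + qb e) := by ring
    rw [h0, hq3]
    linarith

lemma key_one (hT : T.IsTree) {n : ℕ} (ℓ : Fin (n + 1) → V)
    (p : Sym2 V → ZMod 2 × ZMod 2 → ℝ)
    (hp : ∀ e ∈ T.edgeFinset, (∀ g, 0 ≤ p e g) ∧ ∑ g : ZMod 2 × ZMod 2, p e g = 1)
    (qa qb qc : Sym2 V → ℝ)
    (hq : ∀ e ∈ T.edgeFinset,
      Real.exp (-2 * (qa e + qc e)) = 1 - 2 * (p e (1, 0) + p e (1, 1)) ∧
      Real.exp (-2 * (qb e + qc e)) = 1 - 2 * (p e (0, 1) + p e (1, 1)) ∧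
      Real.exp (-2 * (qa e + qb e)) = 1 - 2 * (p e (1, 0) + p e (0, 1)))
    (A B : Finset (Fin n)) :
    (Hmat n * Pspec T ℓ p * Hmat n) A B
      = Real.exp (∑ e ∈ T.edgeFinset, tauK T ℓ qa qb qc A B e) := by
  classical
  have step1 : (Hmat n * Pspec T ℓ p * Hmat n) A B
      = ∑ D : Finset (Fin n), ∑ C : Finset (Fin n),
          Hmat n A C * Pspec T ℓ p C D * Hmat n D B := by
    rw [Matrix.mul_apply]
    refine Finset.sum_congr rfl fun D _ => ?_
    rw [Matrix.mul_apply, Finset.sum_mul]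
  have hP : ∀ C D : Finset (Fin n), Pspec T ℓ p C D
      = ∑ χ ∈ Finset.univ.filter (fun χ : V → ZMod 2 × ZMod 2 => χ (ℓ 0) = 0),
          if ((Finset.univ.filter fun i : Fin n => (χ (ℓ i.succ)).1 = 1) = C ∧
             (Finset.univ.filter fun i : Fin n => (χ (ℓ i.succ)).2 = 1) = D)
          then ∏ e ∈ T.edgeFinset, p e (edgeTheta χ e) else 0 := by
    intro C D
    simp only [Pspec, Matrix.of_apply]
    rw [← Finset.filter_filter, Finset.sum_filter]
  have step2 : ∑ D : Finset (Fin n), ∑ C : Finset (Fin n),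
        Hmat n A C * Pspec T ℓ p C D * Hmat n D B
      = ∑ χ ∈ Finset.univ.filter (fun χ : V → ZMod 2 × ZMod 2 => χ (ℓ 0) = 0),
          Hmat n A (Finset.univ.filter fun i : Fin n => (χ (ℓ i.succ)).1 = 1)
            * (∏ e ∈ T.edgeFinset, p e (edgeTheta χ e))
            * Hmat n (Finset.univ.filter fun i : Fin n => (χ (ℓ i.succ)).2 = 1) B := by
    have h1 : ∀ (D C : Finset (Fin n)), Hmat n A C * Pspec T ℓ p C D * Hmat n D B
        = ∑ χ ∈ Finset.univ.filter (fun χ : V → ZMod 2 × ZMod 2 => χ (ℓ 0) = 0),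
            (if ((Finset.univ.filter fun i : Fin n => (χ (ℓ i.succ)).1 = 1) = C ∧
                (Finset.univ.filter fun i : Fin n => (χ (ℓ i.succ)).2 = 1) = D)
             then Hmat n A C * (∏ e ∈ T.edgeFinset, p e (edgeTheta χ e)) * Hmat n D B
             else 0) := by
      intro D C
      rw [hP C D, Finset.mul_sum, Finset.sum_mul]
      refine Finset.sum_congr rfl fun χ _ => ?_
      rw [mul_ite, mul_zero, ite_mul, zero_mul]
    rw [Finset.sum_congr rfl fun D _ => Finset.sum_congr rfl fun C _ => h1 D C]
    rw [Finset.sum_congr rfl fun D _ => Finset.sum_comm, Finset.sum_comm]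
    refine Finset.sum_congr rfl fun χ hχ => ?_
    rw [Finset.sum_eq_single (Finset.univ.filter fun i : Fin n => (χ (ℓ i.succ)).2 = 1)]
    · rw [Finset.sum_eq_single (Finset.univ.filter fun i : Fin n => (χ (ℓ i.succ)).1 = 1)]
      · rw [if_pos ⟨rfl, rfl⟩]
      · intro C _ hC; exact if_neg (fun hc => hC hc.1.symm)
      · intro h; exact absurd (Finset.mem_univ _) h
    · intro D _ hD
      exact Finset.sum_eq_zero fun C _ => if_neg (fun hc => hD hc.2.symm)
    · intro h; exact absurd (Finset.mem_univ _) h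
  have hsign1 : ∀ χ : V → ZMod 2 × ZMod 2,
      Hmat n A (Finset.univ.filter fun i : Fin n => (χ (ℓ i.succ)).1 = 1)
        = ∏ i ∈ A, sgn ((χ (ℓ i.succ)).1) := by
    intro χ
    rw [hmat_apply, prod_sgn]
    congr 1
    congr 1
    ext i
    simp [Finset.mem_inter, Finset.mem_filter]
  have hsign2 : ∀ χ : V → ZMod 2 × ZMod 2,
      Hmat n (Finset.univ.filter fun i : Fin n => (χ (ℓ i.succ)).2 = 1) B
        = ∏ i ∈ B, sgn ((χ (ℓ i.succ)).2) := by
    intro χ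
    rw [hmat_apply, Finset.inter_comm, prod_sgn]
    congr 1
    congr 1
    ext i
    simp [Finset.mem_inter, Finset.mem_filter]
  have step3 : ∑ χ ∈ Finset.univ.filter (fun χ : V → ZMod 2 × ZMod 2 => χ (ℓ 0) = 0),
        Hmat n A (Finset.univ.filter fun i : Fin n => (χ (ℓ i.succ)).1 = 1)
          * (∏ e ∈ T.edgeFinset, p e (edgeTheta χ e))
          * Hmat n (Finset.univ.filter fun i : Fin n => (χ (ℓ i.succ)).2 = 1) B
      = ∑ χ ∈ Finset.univ.filter (fun χ : V → ZMod 2 × ZMod 2 => χ (ℓ 0) = 0),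
          (∏ i ∈ A, sgn ((χ (ℓ i.succ)).1))
            * (∏ e ∈ T.edgeFinset, p e (edgeTheta χ e))
            * (∏ i ∈ B, sgn ((χ (ℓ i.succ)).2)) :=
    Finset.sum_congr rfl fun χ _ => by rw [hsign1 χ, hsign2 χ]
  have step4 : ∑ χ ∈ Finset.univ.filter (fun χ : V → ZMod 2 × ZMod 2 => χ (ℓ 0) = 0),
        (∏ i ∈ A, sgn ((χ (ℓ i.succ)).1))
          * (∏ e ∈ T.edgeFinset, p e (edgeTheta χ e))
          * (∏ i ∈ B, sgn ((χ (ℓ i.succ)).2))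
      = ∑ θ : T.edgeFinset → ZMod 2 × ZMod 2,
          (∏ i ∈ A, sgn ((chiOf T (ℓ 0) θ (ℓ i.succ)).1))
            * (∏ e ∈ T.edgeFinset, p e (edgeTheta (chiOf T (ℓ 0) θ) e))
            * (∏ i ∈ B, sgn ((chiOf T (ℓ 0) θ (ℓ i.succ)).2)) := by
    refine Finset.sum_nbij' (fun χ => fun e : T.edgeFinset => edgeTheta χ (e : Sym2 V))
      (chiOf T (ℓ 0)) (fun χ _ => Finset.mem_univ _)
      (fun θ _ => Finset.mem_filter.mpr ⟨Finset.mem_univ _, chiOf_root _ _⟩) ?_ ?_ ?_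
    · intro χ hχ
      exact chiOf_theta hT (ℓ 0) ((Finset.mem_filter.mp hχ).2)
    · intro θ _
      funext e
      exact edgeTheta_chiOf hT (ℓ 0) θ e
    · intro χ hχ
      rw [chiOf_theta hT (ℓ 0) ((Finset.mem_filter.mp hχ).2)]
  have step5 : ∀ θ : T.edgeFinset → ZMod 2 × ZMod 2,
      (∏ i ∈ A, sgn ((chiOf T (ℓ 0) θ (ℓ i.succ)).1))
        * (∏ e ∈ T.edgeFinset, p e (edgeTheta (chiOf T (ℓ 0) θ) e))
        * (∏ i ∈ B, sgn ((chiOf T (ℓ 0) θ (ℓ i.succ)).2))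
      = ∏ e : T.edgeFinset,
          (sgn ((θ e).1) ^ ((A ∩ edgeSplit T ℓ (e : Sym2 V)).card)
            * p (e : Sym2 V) (θ e)
            * sgn ((θ e).2) ^ ((B ∩ edgeSplit T ℓ (e : Sym2 V)).card)) := by
    intro θ
    have hmid : (∏ e ∈ T.edgeFinset, p e (edgeTheta (chiOf T (ℓ 0) θ) e))
        = ∏ e : T.edgeFinset, p (e : Sym2 V) (θ e) := by
      rw [← Finset.prod_attach T.edgeFinset
        (fun e => p e (edgeTheta (chiOf T (ℓ 0) θ) e)), Finset.univ_eq_attach]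
      exact Finset.prod_congr rfl fun e _ => by rw [edgeTheta_chiOf hT (ℓ 0) θ e]
    have hchi1 : ∀ i : Fin n, ((chiOf T (ℓ 0) θ (ℓ i.succ)).1)
        = ∑ e : T.edgeFinset, (if i ∈ edgeSplit T ℓ (e : Sym2 V) then (θ e).1 else 0) := by
      intro i
      rw [chiOf, Prod.fst_sum]
      refine Finset.sum_congr rfl fun e _ => ?_
      rw [apply_ite Prod.fst, Prod.fst_zero]
      congr 1
      simp [edgeSplit]
    have hchi2 : ∀ i : Fin n, ((chiOf T (ℓ 0) θ (ℓ i.succ)).2)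
        = ∑ e : T.edgeFinset, (if i ∈ edgeSplit T ℓ (e : Sym2 V) then (θ e).2 else 0) := by
      intro i
      rw [chiOf, Prod.snd_sum]
      refine Finset.sum_congr rfl fun e _ => ?_
      rw [apply_ite Prod.snd, Prod.snd_zero]
      congr 1
      simp [edgeSplit]
    have hprod1 : (∏ i ∈ A, sgn ((chiOf T (ℓ 0) θ (ℓ i.succ)).1))
        = ∏ e : T.edgeFinset, sgn ((θ e).1) ^ ((A ∩ edgeSplit T ℓ (e : Sym2 V)).card) := by
      rw [Finset.prod_congr rfl (fun i _ => by rw [hchi1 i, sgn_sum])]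
      rw [Finset.prod_comm]
      refine Finset.prod_congr rfl fun e _ => ?_
      rw [← prod_ite_mem A (edgeSplit T ℓ (e : Sym2 V)) (sgn ((θ e).1))]
      refine Finset.prod_congr rfl fun i _ => ?_
      by_cases hc : i ∈ edgeSplit T ℓ (e : Sym2 V) <;> simp [hc, sgn_zero]
    have hprod2 : (∏ i ∈ B, sgn ((chiOf T (ℓ 0) θ (ℓ i.succ)).2))
        = ∏ e : T.edgeFinset, sgn ((θ e).2) ^ ((B ∩ edgeSplit T ℓ (e : Sym2 V)).card) := by
      rw [Finset.prod_congr rfl (fun i _ => by rw [hchi2 i, sgn_sum])]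
      rw [Finset.prod_comm]
      refine Finset.prod_congr rfl fun e _ => ?_
      rw [← prod_ite_mem B (edgeSplit T ℓ (e : Sym2 V)) (sgn ((θ e).2))]
      refine Finset.prod_congr rfl fun i _ => ?_
      by_cases hc : i ∈ edgeSplit T ℓ (e : Sym2 V) <;> simp [hc, sgn_zero]
    rw [hprod1, hmid, hprod2, ← Finset.prod_mul_distrib, ← Finset.prod_mul_distrib]
  have step6 : ∑ θ : T.edgeFinset → ZMod 2 × ZMod 2,
        ∏ e : T.edgeFinset,
          (sgn ((θ e).1) ^ ((A ∩ edgeSplit T ℓ (e : Sym2 V)).card)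
            * p (e : Sym2 V) (θ e)
            * sgn ((θ e).2) ^ ((B ∩ edgeSplit T ℓ (e : Sym2 V)).card))
      = ∏ e : T.edgeFinset, ∑ g : ZMod 2 × ZMod 2,
          (sgn g.1 ^ ((A ∩ edgeSplit T ℓ (e : Sym2 V)).card)
            * p (e : Sym2 V) g
            * sgn g.2 ^ ((B ∩ edgeSplit T ℓ (e : Sym2 V)).card)) := by
    have := Finset.prod_univ_sum (fun _ : T.edgeFinset => (Finset.univ : Finset (ZMod 2 × ZMod 2)))
      (fun e g => sgn g.1 ^ ((A ∩ edgeSplit T ℓ (e : Sym2 V)).card)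
            * p (e : Sym2 V) g
            * sgn g.2 ^ ((B ∩ edgeSplit T ℓ (e : Sym2 V)).card))
    rw [Fintype.piFinset_univ] at this
    exact this.symm
  have step7 : ∏ e : T.edgeFinset, ∑ g : ZMod 2 × ZMod 2,
          (sgn g.1 ^ ((A ∩ edgeSplit T ℓ (e : Sym2 V)).card)
            * p (e : Sym2 V) g
            * sgn g.2 ^ ((B ∩ edgeSplit T ℓ (e : Sym2 V)).card))
      = Real.exp (∑ e ∈ T.edgeFinset, tauK T ℓ qa qb qc A B e) := by
    have hterm : ∀ e : T.edgeFinset,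
        (∑ g : ZMod 2 × ZMod 2,
          (sgn g.1 ^ ((A ∩ edgeSplit T ℓ (e : Sym2 V)).card)
            * p (e : Sym2 V) g
            * sgn g.2 ^ ((B ∩ edgeSplit T ℓ (e : Sym2 V)).card)))
        = Real.exp (tauK T ℓ qa qb qc A B (e : Sym2 V)) := by
      intro e
      obtain ⟨hq1, hq2, hq3⟩ := hq (e : Sym2 V) e.2
      obtain ⟨-, hp1⟩ := hp (e : Sym2 V) e.2
      rw [edge_factor hp1 hq1 hq2 hq3, tauK]
    rw [Finset.prod_congr rfl (fun e _ => hterm e), ← Real.exp_sum]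
    congr 1
    rw [Finset.univ_eq_attach]
    exact Finset.sum_attach T.edgeFinset (tauK T ℓ qa qb qc A B)
  rw [step1, step2, step3, step4, Finset.sum_congr rfl (fun θ _ => step5 θ), step6, step7]

end KeyOne

theorem stmt19 {V : Type*} [Fintype V] (T : SimpleGraph V) (hT : T.IsTree)
    {n : ℕ} (ℓ : Fin (n + 1) → V) (hinj : Function.Injective ℓ)
    (hleaf : ∀ v : V, T.degree v = 1 ↔ v ∈ Set.range ℓ)
    (hsplit : ∀ e ∈ T.edgeFinset, ∀ f ∈ T.edgeFinset,
      edgeSplit T ℓ e = edgeSplit T ℓ f → e = f)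
    (p : Sym2 V → ZMod 2 × ZMod 2 → ℝ)
    (hp : ∀ e ∈ T.edgeFinset, (∀ g, 0 ≤ p e g) ∧ ∑ g : ZMod 2 × ZMod 2, p e g = 1)
    (qa qb qc : Sym2 V → ℝ)
    (hq : ∀ e ∈ T.edgeFinset,
      Real.exp (-2 * (qa e + qc e)) = 1 - 2 * (p e (1, 0) + p e (1, 1)) ∧
      Real.exp (-2 * (qb e + qc e)) = 1 - 2 * (p e (0, 1) + p e (1, 1)) ∧
      Real.exp (-2 * (qa e + qb e)) = 1 - 2 * (p e (1, 0) + p e (0, 1)))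
    (hpos : ∀ A B : Finset (Fin n), 0 < (Hmat n * Pspec T ℓ p * Hmat n) A B) :
    QspecT T ℓ qa qb qc =
      (((2 : ℝ) ^ n)⁻¹ • Hmat n) *
        (Matrix.of fun A B =>
          Real.log ((Hmat n * Pspec T ℓ p * Hmat n) A B)) *
        (((2 : ℝ) ^ n)⁻¹ • Hmat n) := by
  classical
  have hL : (Matrix.of fun A B => Real.log ((Hmat n * Pspec T ℓ p * Hmat n) A B))
      = Hmat n * QspecT T ℓ qa qb qc * Hmat n := by
    ext A B
    rw [Matrix.of_apply, key_one hT ℓ p hp qa qb qc hq A B, Real.log_exp,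
      key_two hT ℓ hleaf qa qb qc A B]
  rw [hL]
  rw [Matrix.smul_mul, Matrix.smul_mul, Matrix.mul_smul]
  have hassoc : Hmat n * (Hmat n * QspecT T ℓ qa qb qc * Hmat n) * Hmat n
      = (Hmat n * Hmat n) * QspecT T ℓ qa qb qc * (Hmat n * Hmat n) := by
    noncomm_ring
  rw [hassoc, hmat_mul_hmat, Matrix.smul_mul, Matrix.one_mul, Matrix.mul_smul, Matrix.mul_one]
  rw [smul_smul, smul_smul, smul_smul]
  rw [show ((2:ℝ)^n)⁻¹ * ((2:ℝ)^n)⁻¹ * (2:ℝ)^n * (2:ℝ)^n = 1 from by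
    have h2 : ((2:ℝ)^n) ≠ 0 := pow_ne_zero _ two_ne_zero
    field_simp]
  rw [one_smul]
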